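/- arXiv:math/0208018 — 3 statements merged into one kernel-verified Lean document; each statement's English description precedes it below -/
import Mathlib

section
/- The Lie algebra 𝔤 is the internal direct sum of the subspaces 𝔤_α as α ranges over the (finitely many) linear functionals on 𝔞 for which 𝔤_α ≠ 0; moreover, 𝔤_α and 𝔤_β are orthogonal whenever α ≠ β. -/
/-- The root space `𝔤_α = {z ∈ 𝔤 : [x,z] = α(x)z for all x ∈ 𝔞}` attached to a linear
functional `α` on an abelian subalgebra `𝔞 ⊆ 𝔤`. -/
def rootSpace' {G : Type*} [LieRing G] [LieAlgebra ℝ G]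
    (𝔞 : LieSubalgebra ℝ G) (α : Module.Dual ℝ 𝔞) : Submodule ℝ G where
  carrier := {z : G | ∀ x : 𝔞, ⁅(x : G), z⁆ = α x • z}
  add_mem' := fun hz hw x => by rw [lie_add, hz x, hw x, smul_add]
  zero_mem' := fun x => by rw [lie_zero, smul_zero]
  smul_mem' := fun c z hz x => by rw [lie_smul, hz x, smul_comm]

theorem mem_rootSpace' {G : Type*} [LieRing G] [LieAlgebra ℝ G]
    (𝔞 : LieSubalgebra ℝ G) (α : Module.Dual ℝ 𝔞) (z : G) :
    z ∈ rootSpace' 𝔞 α ↔ ∀ x : 𝔞, ⁅(x : G), z⁆ = α x • z := Iff.rfl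

/-- if `𝔤` is a finite-dimensional real Lie algebra with an inner product
`⟨·,·⟩` and `𝔞 ⊆ 𝔤` is an abelian subalgebra such that each `ad(x)`, `x ∈ 𝔞`, is
symmetric, then `𝔤` is the internal direct sum of the root spaces `𝔤_α` over the
(finitely many) `α` with `𝔤_α ≠ 0`, and distinct root spaces are orthogonal. -/
theorem rootSpace_internal_direct_sum_orthogonal
    (G : Type*) [LieRing G] [LieAlgebra ℝ G] [FiniteDimensional ℝ G]
    (ip : LinearMap.BilinForm ℝ G)
    (hipsymm : ∀ u v : G, ip u v = ip v u)
    (hippos : ∀ u : G, u ≠ 0 → 0 < ip u u)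
    (𝔞 : LieSubalgebra ℝ G)
    (habel : ∀ x y : 𝔞, ⁅(x : G), (y : G)⁆ = 0)
    (hadsym : ∀ (x : 𝔞) (y z : G), ip ⁅(x : G), y⁆ z = ip y ⁅(x : G), z⁆) :
    {α : Module.Dual ℝ 𝔞 | rootSpace' 𝔞 α ≠ ⊥}.Finite ∧
    iSupIndep (fun α : {α : Module.Dual ℝ 𝔞 // rootSpace' 𝔞 α ≠ ⊥} =>
      rootSpace' 𝔞 α.1) ∧
    (⨆ α : {α : Module.Dual ℝ 𝔞 // rootSpace' 𝔞 α ≠ ⊥}, rootSpace' 𝔞 α.1) = ⊤ ∧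
    ∀ α β : Module.Dual ℝ 𝔞, α ≠ β →
      ∀ u ∈ rootSpace' 𝔞 α, ∀ v ∈ rootSpace' 𝔞 β, ip u v = 0 := by
  -- Orthogonality of distinct root spaces.
  have horth : ∀ α β : Module.Dual ℝ 𝔞, α ≠ β →
      ∀ u ∈ rootSpace' 𝔞 α, ∀ v ∈ rootSpace' 𝔞 β, ip u v = 0 := by
    intro α β hab u hu v hv
    obtain ⟨x, hx⟩ : ∃ x : 𝔞, α x ≠ β x := by
      by_contra h
      push_neg at h
      exact hab (LinearMap.ext h)
    have h1 : ip ⁅(x : G), u⁆ v = α x * ip u v := by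
      rw [hu x]; simp
    have h2 : ip u ⁅(x : G), v⁆ = β x * ip u v := by
      rw [hv x]; simp
    have := hadsym x u v
    rw [h1, h2] at this
    by_contra hne
    exact hx (mul_right_cancel₀ hne this)
  -- Independence of the full family of root spaces.
  have hindep : iSupIndep (fun α : Module.Dual ℝ 𝔞 => rootSpace' 𝔞 α) := by
    intro α
    rw [Submodule.disjoint_def]
    intro u hu1 hu2
    rw [iSup_subtype'] at hu2
    rw [Submodule.mem_iSup_iff_exists_finsupp] at hu2
    obtain ⟨f, hf, hsum⟩ := hu2
    by_contra hu0
    have h0 : ip u u = 0 := by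
      nth_rewrite 2 [← hsum]
      rw [map_finsuppSum]
      refine Finset.sum_eq_zero fun β _ => ?_
      show ip u (f β) = 0
      rw [hipsymm]
      exact horth β.1 α β.2 (f β) (hf β) u hu1
    exact absurd h0 (ne_of_gt (hippos u hu0))
  -- Finiteness of the set of roots.
  haveI : Fintype {α : Module.Dual ℝ 𝔞 // rootSpace' 𝔞 α ≠ ⊥} :=
    hindep.fintypeNeBotOfFiniteDimensional
  have hfin : {α : Module.Dual ℝ 𝔞 | rootSpace' 𝔞 α ≠ ⊥}.Finite := by
    have h : Finite {α : Module.Dual ℝ 𝔞 // rootSpace' 𝔞 α ≠ ⊥} := Finite.of_fintype _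
    exact Set.finite_coe_iff.mp h
  refine ⟨hfin, hindep.comp Subtype.val_injective, ?_, horth⟩
  -- Set up the inner product space structure coming from `ip`.
  letI core : InnerProductSpace.Core ℝ G :=
    { inner := fun u v => ip u v
      conj_inner_symm := fun u v => by simpa using hipsymm v u
      re_inner_nonneg := fun u => by
        rcases eq_or_ne u 0 with rfl | h
        · simp
        · exact le_of_lt (by simpa using hippos u h)
      definite := fun u h => by
        by_contra h0
        exact absurd h (ne_of_gt (hippos u h0))
      add_left := fun u v w => by simp
      smul_left := fun u v c => by simp [mul_comm] }
  letI : NormedAddCommGroup G := core.toNormedAddCommGroup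
  letI : InnerProductSpace ℝ G := InnerProductSpace.ofCore core.toCore
  -- The family of commuting symmetric operators `ad x`, `x ∈ 𝔞`.
  set T : 𝔞 → G →ₗ[ℝ] G := fun x => LieAlgebra.ad ℝ G (x : G) with hT
  have hTapp : ∀ (x : 𝔞) (z : G), T x z = ⁅(x : G), z⁆ := fun x z => rfl
  have hTsym : ∀ x : 𝔞, (T x).IsSymmetric := by
    intro x u v
    exact hadsym x u v
  have hTcomm : Pairwise (Function.onFun Commute T) := by
    intro x y _
    show T x * T y = T y * T x
    ext z
    simp only [Module.End.mul_apply, hTapp]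
    rw [leibniz_lie, habel x y, zero_lie, zero_add]
  have htop := LinearMap.IsSymmetric.iSup_iInf_eq_top_of_commute hTsym hTcomm
  -- Conclude the supremum is ⊤.
  refine le_antisymm le_top ?_
  rw [← htop]
  refine iSup_le fun χ => ?_
  rcases eq_or_ne (⨅ x, Module.End.eigenspace (T x) (χ x)) ⊥ with hb | hb
  · rw [hb]; exact bot_le
  obtain ⟨z, hz, hz0⟩ := Submodule.exists_mem_ne_zero_of_ne_bot hb
  have hzx : ∀ x : 𝔞, ⁅(x : G), z⁆ = χ x • z := by
    intro x
    have := Submodule.mem_iInf _ |>.1 hz x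
    rwa [Module.End.mem_eigenspace_iff] at this
  -- χ is automatically linear.
  have hlin_add : ∀ x y : 𝔞, χ (x + y) = χ x + χ y := by
    intro x y
    apply smul_left_injective ℝ hz0
    show χ (x + y) • z = (χ x + χ y) • z
    rw [← hzx (x + y), add_smul, ← hzx x, ← hzx y]
    push_cast
    rw [add_lie]
  have hlin_smul : ∀ (c : ℝ) (x : 𝔞), χ (c • x) = c * χ x := by
    intro c x
    apply smul_left_injective ℝ hz0
    show χ (c • x) • z = (c * χ x) • z
    have hc : ((c • x : 𝔞) : G) = c • (x : G) := rfl
    rw [← hzx (c • x), mul_smul, ← hzx x, hc, smul_lie]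
  set α : Module.Dual ℝ 𝔞 :=
    { toFun := χ
      map_add' := hlin_add
      map_smul' := hlin_smul } with hα
  have heq : (⨅ x, Module.End.eigenspace (T x) (χ x)) = rootSpace' 𝔞 α := by
    ext w
    simp only [Submodule.mem_iInf, Module.End.mem_eigenspace_iff, mem_rootSpace']
    rfl
  rw [heq]
  have hne : rootSpace' 𝔞 α ≠ ⊥ := heq ▸ hb
  exact le_iSup (fun β : {β : Module.Dual ℝ 𝔞 // rootSpace' 𝔞 β ≠ ⊥} =>
    rootSpace' 𝔞 β.1) ⟨α, hne⟩
end

section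
/- Let 𝔨 := {z ∈ 𝔤 : σ(z) = z} be the fixed subalgebra of σ. Then 𝔤 = 𝔨 + (𝔠 + 𝔫₋), i.e. every z ∈ 𝔤 can be written z = u + w with u ∈ 𝔨 and w ∈ 𝔠 + 𝔫₋. -/
/-- `𝔫₊ = ∑_{α(x)>0} 𝔤_α`. -/
def nPlus {G : Type*} [LieRing G] [LieAlgebra ℝ G]
    (𝔞 : LieSubalgebra ℝ G) (x : 𝔞) : Submodule ℝ G :=
  ⨆ (α : Module.Dual ℝ 𝔞) (_ : 0 < α x), rootSpace' 𝔞 α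

/-- `𝔠 = ∑_{α(x)=0} 𝔤_α`. -/
def cPart {G : Type*} [LieRing G] [LieAlgebra ℝ G]
    (𝔞 : LieSubalgebra ℝ G) (x : 𝔞) : Submodule ℝ G :=
  ⨆ (α : Module.Dual ℝ 𝔞) (_ : α x = 0), rootSpace' 𝔞 α

/-- `𝔫₋ = ∑_{α(x)<0} 𝔤_α`. -/
def nMinus {G : Type*} [LieRing G] [LieAlgebra ℝ G]
    (𝔞 : LieSubalgebra ℝ G) (x : 𝔞) : Submodule ℝ G :=
  ⨆ (α : Module.Dual ℝ 𝔞) (_ : α x < 0), rootSpace' 𝔞 α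


lemma sigma_root {G : Type*} [LieRing G] [LieAlgebra ℝ G]
    (σ : G →ₗ⁅ℝ⁆ G) (𝔞 : LieSubalgebra ℝ G)
    (hσ𝔞 : ∀ x : 𝔞, σ (x : G) = -(x : G)) (α : Module.Dual ℝ 𝔞) :
    Submodule.map (σ : G →ₗ[ℝ] G) (rootSpace' 𝔞 α) ≤ rootSpace' 𝔞 (-α) := by
  rintro _ ⟨z, hz, rfl⟩ y
  have h1 : σ ⁅(y : G), z⁆ = ⁅σ (y : G), σ z⁆ := LieHom.map_lie σ _ _
  rw [hz y, hσ𝔞 y, neg_lie, map_smul] at h1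
  have h2 : ⁅(y:G), σ z⁆ = -(α y • σ z) := by
    rw [← neg_eq_iff_eq_neg, h1]
  simpa [neg_smul] using h2

lemma sigma_nPlus {G : Type*} [LieRing G] [LieAlgebra ℝ G]
    (σ : G →ₗ⁅ℝ⁆ G) (𝔞 : LieSubalgebra ℝ G)
    (hσ𝔞 : ∀ x : 𝔞, σ (x : G) = -(x : G)) (x : 𝔞) :
    Submodule.map (σ : G →ₗ[ℝ] G) (nPlus 𝔞 x) ≤ nMinus 𝔞 x := by
  rw [nPlus, Submodule.map_iSup]
  refine iSup_le fun α => ?_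
  rw [Submodule.map_iSup]
  refine iSup_le fun hα => ?_
  refine (sigma_root σ 𝔞 hσ𝔞 α).trans ?_
  exact le_iSup_of_le (-α) (le_iSup_of_le (by simpa using hα) le_rfl)

/-- with `𝔨 = {z : σ(z) = z}` the fixed subalgebra of `σ`, one has
`𝔤 = 𝔨 + (𝔠 + 𝔫₋)`: every `z ∈ 𝔤` can be written `z = u + w` with `σ(u) = u`
and `w ∈ 𝔠 + 𝔫₋`. -/
theorem fixed_plus_h_spans
    (G : Type*) [LieRing G] [LieAlgebra ℝ G] [FiniteDimensional ℝ G]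
    (σ : G →ₗ⁅ℝ⁆ G) (hinvol : ∀ z : G, σ (σ z) = z)
    (𝔞 : LieSubalgebra ℝ G)
    (habel : ∀ x y : 𝔞, ⁅(x : G), (y : G)⁆ = 0)
    (hσ𝔞 : ∀ x : 𝔞, σ (x : G) = -(x : G))
    (x : 𝔞)
    (hinternal : DirectSum.IsInternal ![nPlus 𝔞 x, cPart 𝔞 x, nMinus 𝔞 x]) :
    ∀ z : G, ∃ u w : G, σ u = u ∧ w ∈ cPart 𝔞 x ⊔ nMinus 𝔞 x ∧ z = u + w := by
  intro z
  have htop : (⨆ i, ![nPlus 𝔞 x, cPart 𝔞 x, nMinus 𝔞 x] i) = ⊤ :=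
    hinternal.submodule_iSup_eq_top
  have hz : z ∈ nPlus 𝔞 x ⊔ (cPart 𝔞 x ⊔ nMinus 𝔞 x) := by
    have hle : (⨆ i, ![nPlus 𝔞 x, cPart 𝔞 x, nMinus 𝔞 x] i) ≤
        nPlus 𝔞 x ⊔ (cPart 𝔞 x ⊔ nMinus 𝔞 x) := by
      refine iSup_le fun i => ?_
      fin_cases i
      · exact le_sup_left
      · exact le_sup_of_le_right le_sup_left
      · exact le_sup_of_le_right le_sup_right
    exact hle (htop ▸ Submodule.mem_top)
  obtain ⟨a, ha, b, hb, rfl⟩ := Submodule.mem_sup.mp hz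
  refine ⟨a + σ a, b - σ a, ?_, ?_, by abel⟩
  · simp [map_add, hinvol, add_comm]
  · have hσa : σ a ∈ nMinus 𝔞 x := sigma_nPlus σ 𝔞 hσ𝔞 x ⟨a, ha, rfl⟩
    exact sub_mem hb (le_sup_right (α := Submodule ℝ G) hσa)
end

section
/- Let 𝔭 := {z ∈ 𝔤 : σ(z) = −z} be the (−1)-eigenspace of σ. Then 𝔭 ∩ 𝔫₋ = {0}. -/
/-- with `𝔭 = {z : σ(z) = −z}` the `(−1)`-eigenspace of `σ`,
one has `𝔭 ∩ 𝔫₋ = {0}`. -/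
theorem p_inter_nMinus_eq_bot
    (G : Type*) [LieRing G] [LieAlgebra ℝ G] [FiniteDimensional ℝ G]
    (σ : G →ₗ⁅ℝ⁆ G) (hinvol : ∀ z : G, σ (σ z) = z)
    (𝔞 : LieSubalgebra ℝ G)
    (habel : ∀ x y : 𝔞, ⁅(x : G), (y : G)⁆ = 0)
    (hσ𝔞 : ∀ x : 𝔞, σ (x : G) = -(x : G))
    (x : 𝔞)
    (hinternal : DirectSum.IsInternal ![nPlus 𝔞 x, cPart 𝔞 x, nMinus 𝔞 x]) :
    ∀ z : G, σ z = -z → z ∈ nMinus 𝔞 x → z = 0 := by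

  -- σ maps 𝔫₋ into 𝔫₊
  have key : nMinus 𝔞 x ≤ Submodule.comap σ.toLinearMap (nPlus 𝔞 x) := by
    refine iSup₂_le fun α hα => ?_
    intro z hz
    have hmem : σ z ∈ rootSpace' 𝔞 (-α) := by
      intro y
      have h1 : ⁅(y : G), σ z⁆ = σ ⁅σ (y : G), z⁆ := by
        rw [LieHom.map_lie, hinvol]
      rw [h1, hσ𝔞, neg_lie, hz y, map_neg σ, map_smul σ]
      simp
    refine Submodule.mem_comap.mpr ?_
    exact Submodule.mem_iSup_of_mem (-α) (Submodule.mem_iSup_of_mem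
      (by simpa using neg_pos.mpr hα) hmem)
  intro z hσz hz
  have hzp : z ∈ nPlus 𝔞 x := by
    have := key hz
    rw [Submodule.mem_comap] at this
    have : σ z ∈ nPlus 𝔞 x := this
    rw [hσz] at this
    simpa using (nPlus 𝔞 x).neg_mem this
  have hindep := hinternal.submodule_iSupIndep
  have hdisj := hindep 0
  have hle : nMinus 𝔞 x ≤ ⨆ (j : Fin 3) (_ : j ≠ (0 : Fin 3)), ![nPlus 𝔞 x, cPart 𝔞 x, nMinus 𝔞 x] j := by
    refine le_iSup_of_le 2 (le_iSup_of_le (by decide) ?_)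
    simp
  have : z ∈ (⊥ : Submodule ℝ G) := hdisj.le_bot ⟨hzp, hle hz⟩
  simpa using this
end
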